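/- Let f : ℝ^d → 𝒴 be any deterministic function into a finite set of classes 𝒴, let μ ∈ ℝ^d and λ₁,…,λ_d > 0, and let ε be a random vector whose i-th coordinate is an independent Laplace random variable with location μ_i and scale λ_i. Suppose that for a specific x ∈ ℝ^d there exist a class c_A ∈ 𝒴 and reals p_A, p_B ∈ [0,1] with p_A > p_B, such that P(f(x+ε)=c_A) ≥ p_A ≥ p_B ≥ max_{c ≠ c_A} P(f(x+ε)=c). Then for every δ ∈ ℝ^d satisfying Σ_{i=1}^d |δ_i|/λ_i ≤ (1/2)·log(p_A/p_B), one has P(f(x+δ+ε)=c_A) ≥ P(f(x+δ+ε)=c) for all c ≠ c_A. -/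

import Mathlib

/-!
The Laplace density satisfies `p(z) ≤ exp (|a| / λ) * p(a + z)` by the triangle inequality, so the
product density, and with it the noise measure of any set `S` (measurable or not), grows by at most
the factor `E = exp (∑ i, |δ i| / λ i)` when `S` is translated by `δ`. Applied to the level sets of
`f`, this gives `P(f(x + δ + ε) = c) ≤ E * p_B` and `p_A ≤ E * P(f(x + δ + ε) = c_A)`. For `p_B > 0`
the hypothesis on `δ` says `E ^ 2 ≤ p_A / p_B`, which closes the gap; for `p_B ≤ 0` the first bound
alone does.
-/

open MeasureTheory ProbabilityTheory

/-- The Laplace measure on `ℝ` with location `m` and scale `l`, given by the density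
`z ↦ (1/(2l)) · exp(−|z − m|/l)` with respect to Lebesgue measure. -/
noncomputable def laplaceReal (m l : ℝ) : Measure ℝ :=
  volume.withDensity fun z => ENNReal.ofReal ((2 * l)⁻¹ * Real.exp (-|z - m| / l))

open scoped ENNReal

namespace MeasureTheory

theorem lintegral_fin_nat_prod_eq_prod {n : ℕ} {α : Type*} [MeasurableSpace α]
    {μ : Fin n → Measure α} [∀ i, SigmaFinite (μ i)]
    {f : Fin n → α → ℝ≥0∞} (hf : ∀ i, Measurable (f i)) :
    ∫⁻ x : Fin n → α, ∏ i, f i (x i) ∂Measure.pi μ = ∏ i, ∫⁻ y, f i y ∂μ i := by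
  induction n with
  | zero => simp
  | succ n ih =>
    calc
      _ = ∫⁻ x : α × (Fin n → α), f 0 x.1 * ∏ i : Fin n, f i.succ (x.2 i)
            ∂(μ 0).prod (Measure.pi fun i ↦ μ i.succ) := by
        rw [← (measurePreserving_piFinSuccAbove μ 0).symm.lintegral_comp_emb
          (MeasurableEquiv.measurableEmbedding _)]
        simp_rw [MeasurableEquiv.piFinSuccAbove_symm_apply, Fin.insertNthEquiv,
          Fin.prod_univ_succ, Fin.insertNth_zero, Equiv.coe_fn_mk, Fin.cons_succ,
          Fin.zero_succAbove, cast_eq, Fin.cons_zero]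
      _ = (∫⁻ y, f 0 y ∂μ 0) * ∏ i : Fin n, ∫⁻ y, f i.succ y ∂μ i.succ := by
        rw [lintegral_prod_mul (g := fun y : Fin n → α ↦ ∏ i, f i.succ (y i))
          (hf 0).aemeasurable
          (Finset.measurable_prod _ fun i _ ↦ (hf _).comp (measurable_pi_apply i)).aemeasurable,
          ih fun i ↦ hf i.succ]
      _ = ∏ i, ∫⁻ y, f i y ∂μ i := (Fin.prod_univ_succ fun i ↦ ∫⁻ y, f i y ∂μ i).symm

theorem lintegral_fintype_prod_eq_prod {ι α : Type*} [Fintype ι] [MeasurableSpace α]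
    {μ : ι → Measure α} [∀ i, SigmaFinite (μ i)]
    {f : ι → α → ℝ≥0∞} (hf : ∀ i, Measurable (f i)) :
    ∫⁻ x : ι → α, ∏ i, f i (x i) ∂Measure.pi μ = ∏ i, ∫⁻ y, f i y ∂μ i := by
  let e := (Fintype.equivFin ι).symm
  rw [← (measurePreserving_piCongrLeft _ e).lintegral_comp_emb
    (MeasurableEquiv.measurableEmbedding _)]
  simp_rw [← e.prod_comp, MeasurableEquiv.coe_piCongrLeft, Equiv.piCongrLeft_apply_apply]
  exact lintegral_fin_nat_prod_eq_prod fun i ↦ hf (e i)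

theorem Measure.pi_withDensity {ι α : Type*} [Fintype ι] [MeasurableSpace α]
    (μ : ι → Measure α) [∀ i, SigmaFinite (μ i)] {g : ι → α → ℝ≥0∞}
    (hg : ∀ i, Measurable (g i)) [∀ i, SigmaFinite ((μ i).withDensity (g i))] :
    Measure.pi (fun i ↦ (μ i).withDensity (g i)) =
      (Measure.pi μ).withDensity fun x ↦ ∏ i, g i (x i) := by
  refine Measure.pi_eq fun s hs ↦ ?_
  have hind : (Set.univ.pi s).indicator (fun x ↦ ∏ i, g i (x i)) =
      fun x ↦ ∏ i, (s i).indicator (g i) (x i) := by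
    ext x
    classical simp [Set.indicator, Finset.prod_ite_zero]
  rw [withDensity_apply _ (.univ_pi hs), ← lintegral_indicator (.univ_pi hs), hind,
    lintegral_fintype_prod_eq_prod fun i ↦ (hg i).indicator (hs i)]
  exact Finset.prod_congr rfl fun i _ ↦ by
    rw [lintegral_indicator (hs i), withDensity_apply _ (hs i)]

theorem withDensity_preimage_add_left_le {G : Type*} [MeasurableSpace G] [AddGroup G]
    [MeasurableAdd G] (μ : Measure G) [μ.IsAddLeftInvariant] [SFinite μ]
    {g : G → ℝ≥0∞} (hg : Measurable g) {C : ℝ≥0∞} {v : G} (h : ∀ x, g x ≤ C * g (v + x))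
    (S : Set G) :
    μ.withDensity g ((v + ·) ⁻¹' S) ≤ C * μ.withDensity g S := by
  rw [withDensity_apply', withDensity_apply']
  calc ∫⁻ x in (v + ·) ⁻¹' S, g x ∂μ
      ≤ ∫⁻ x in (v + ·) ⁻¹' S, C * g (v + x) ∂μ := lintegral_mono h
    _ = C * ∫⁻ x in (v + ·) ⁻¹' S, g (v + x) ∂μ :=
      lintegral_const_mul C (hg.comp (measurable_const_add v))
    _ = C * ∫⁻ y in S, g y ∂μ := by
      rw [(measurePreserving_add_left μ v).setLIntegral_comp_preimage_emb
        (MeasurableEquiv.addLeft v).measurableEmbedding]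

end MeasureTheory

open Real

noncomputable def laplacePDFReal (m l z : ℝ) : ℝ := (2 * l)⁻¹ * exp (-|z - m| / l)

@[fun_prop]
theorem measurable_laplacePDFReal (m l : ℝ) : Measurable (laplacePDFReal m l) := by
  unfold laplacePDFReal
  fun_prop

theorem laplaceReal_eq_withDensity (m l : ℝ) :
    laplaceReal m l = volume.withDensity fun z ↦ ENNReal.ofReal (laplacePDFReal m l z) := rfl

theorem integral_exp_neg_abs_sub_div {l : ℝ} (hl : 0 < l) (m : ℝ) :
    ∫ z, exp (-|z - m| / l) = 2 * l := by
  calc ∫ z, exp (-|z - m| / l)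
      = ∫ z, exp (-|z| / l) := integral_sub_right_eq_self (fun z ↦ exp (-|z| / l)) m
    _ = 2 * ∫ z in Set.Ioi 0, exp (-l⁻¹ * z) := by
      simp_rw [neg_mul, ← div_eq_inv_mul, neg_div]
      exact integral_comp_abs (f := fun z ↦ exp (-(z / l)))
    _ = 2 * l := by
      rw [integral_exp_mul_Ioi (neg_lt_zero.2 (inv_pos.2 hl))]
      simp

theorem isProbabilityMeasure_laplaceReal {l : ℝ} (hl : 0 < l) (m : ℝ) :
    IsProbabilityMeasure (laplaceReal m l) := by
  have hint : Integrable fun z ↦ exp (-|z - m| / l) :=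
    .of_integral_ne_zero (by rw [integral_exp_neg_abs_sub_div hl]; positivity)
  constructor
  rw [laplaceReal, withDensity_apply _ MeasurableSet.univ, Measure.restrict_univ,
    ← ofReal_integral_eq_lintegral_ofReal (hint.const_mul _)
      (.of_forall fun z ↦ by positivity),
    integral_const_mul, integral_exp_neg_abs_sub_div hl, inv_mul_cancel₀ (by positivity),
    ENNReal.ofReal_one]

theorem laplacePDFReal_le_exp_mul {l : ℝ} (hl : 0 < l) (m a z : ℝ) :
    laplacePDFReal m l z ≤ exp (|a| / l) * laplacePDFReal m l (a + z) := by
  have htri : |a + z - m| ≤ |a| + |z - m| := by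
    simpa only [add_sub_assoc] using abs_add_le a (z - m)
  calc laplacePDFReal m l z
      ≤ (2 * l)⁻¹ * exp ((|a| - |a + z - m|) / l) := by
        unfold laplacePDFReal
        gcongr
        linarith
    _ = exp (|a| / l) * laplacePDFReal m l (a + z) := by
        rw [laplacePDFReal, sub_div, sub_eq_add_neg, ← neg_div, exp_add]
        ring

theorem pi_laplaceReal_eq_withDensity {ι : Type*} [Fintype ι] (m l : ι → ℝ) :
    Measure.pi (fun i ↦ laplaceReal (m i) (l i)) =
      volume.withDensity fun x ↦ ∏ i, ENNReal.ofReal (laplacePDFReal (m i) (l i) (x i)) := by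
  have (i : ι) : SigmaFinite ((volume : Measure ℝ).withDensity
      fun z ↦ ENNReal.ofReal (laplacePDFReal (m i) (l i) z)) :=
    SigmaFinite.withDensity_of_ne_top' fun _ ↦ ENNReal.ofReal_ne_top
  simp_rw [laplaceReal_eq_withDensity, volume_pi]
  exact Measure.pi_withDensity (g := fun i z ↦ ENNReal.ofReal (laplacePDFReal (m i) (l i) z))
    (fun _ ↦ volume) fun i ↦ by fun_prop

theorem pi_laplaceReal_preimage_add_le {ι : Type*} [Fintype ι] (m : ι → ℝ) {l : ι → ℝ}
    (hl : ∀ i, 0 < l i) (v : ι → ℝ) (S : Set (ι → ℝ)) :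
    Measure.pi (fun i ↦ laplaceReal (m i) (l i)) ((v + ·) ⁻¹' S) ≤
      ENNReal.ofReal (exp (∑ i, |v i| / l i)) *
        Measure.pi (fun i ↦ laplaceReal (m i) (l i)) S := by
  rw [pi_laplaceReal_eq_withDensity]
  refine withDensity_preimage_add_left_le volume (by fun_prop) (fun x ↦ ?_) S
  calc ∏ i, ENNReal.ofReal (laplacePDFReal (m i) (l i) (x i))
      ≤ ∏ i, ENNReal.ofReal (exp (|v i| / l i)) *
          ENNReal.ofReal (laplacePDFReal (m i) (l i) (v i + x i)) :=
        Finset.prod_le_prod' fun i _ ↦ by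
          rw [← ENNReal.ofReal_mul (exp_pos _).le]
          exact ENNReal.ofReal_le_ofReal (laplacePDFReal_le_exp_mul (hl i) _ _ _)
    _ = _ := by
        rw [Finset.prod_mul_distrib, exp_sum,
          ENNReal.ofReal_prod_of_nonneg fun i _ ↦ (exp_pos _).le]
        rfl

theorem pi_laplaceReal_toReal_preimage_add_le {ι : Type*} [Fintype ι] (m : ι → ℝ) {l : ι → ℝ}
    (hl : ∀ i, 0 < l i) (v : ι → ℝ) (S : Set (ι → ℝ)) :
    (Measure.pi (fun i ↦ laplaceReal (m i) (l i)) ((v + ·) ⁻¹' S)).toReal ≤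
      exp (∑ i, |v i| / l i) * (Measure.pi (fun i ↦ laplaceReal (m i) (l i)) S).toReal := by
  have := fun i ↦ isProbabilityMeasure_laplaceReal (hl i) (m i)
  refine ENNReal.toReal_le_of_le_ofReal (by positivity)
    ((pi_laplaceReal_preimage_add_le m hl v S).trans_eq ?_)
  rw [ENNReal.ofReal_mul (exp_pos _).le, ENNReal.ofReal_toReal (measure_ne_top _ _)]

theorem le_of_exp_mul_bounds {t pA pB a b : ℝ} (ha : 0 ≤ a) (hpA : pA ≤ exp t * a)
    (hb : b ≤ exp t * pB) (hlt : pB < pA) (ht : t ≤ 1 / 2 * log (pA / pB)) : b ≤ a := by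
  rcases le_or_gt pB 0 with hpB | hpB
  · nlinarith [exp_pos t]
  have hexp : exp t * exp t * pB ≤ pA := by
    rw [← exp_add, ← le_div_iff₀ hpB, ← exp_log (div_pos (hpB.trans hlt) hpB)]
    exact exp_le_exp.2 (by linarith)
  have : exp t * pB ≤ a := le_of_mul_le_mul_left (by linarith) (exp_pos t)
  linarith

theorem laplace_certified_region_general
    {d : ℕ} {Y : Type*}
    (f : (Fin d → ℝ) → Y)
    (μ : Fin d → ℝ) (lam : Fin d → ℝ) (hlam : ∀ i, 0 < lam i)
    (noise : Measure (Fin d → ℝ))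
    (hnoise : noise = Measure.pi fun i : Fin d => laplaceReal (μ i) (lam i))
    (x : Fin d → ℝ) (cA : Y) (pA pB : ℝ)
    (hABstrict : pA > pB)
    (hA : (noise {e | f (x + e) = cA}).toReal ≥ pA)
    (hB : ∀ c : Y, c ≠ cA → pB ≥ (noise {e | f (x + e) = c}).toReal)
    (δ : Fin d → ℝ)
    (hδ : (∑ i, |δ i| / lam i) ≤ (1 / 2) * Real.log (pA / pB)) :
    ∀ c : Y, c ≠ cA →
      (noise {e | f (x + δ + e) = cA}).toReal ≥
        (noise {e | f (x + δ + e) = c}).toReal := by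
  subst hnoise
  set ν := Measure.pi fun i ↦ laplaceReal (μ i) (lam i)
  intro c hc
  have hshift : ∀ y, {e | f (x + δ + e) = y} = (δ + ·) ⁻¹' {e | f (x + e) = y} := fun y ↦ by
    ext e; simp [add_assoc]
  have hA_shift : (ν {e | f (x + e) = cA}).toReal ≤
      exp (∑ i, |δ i| / lam i) * (ν {e | f (x + δ + e) = cA}).toReal := by
    simpa [hshift, Set.preimage_preimage] using
      pi_laplaceReal_toReal_preimage_add_le μ hlam (-δ) {e | f (x + δ + e) = cA}
  have hc_shift := hshift c ▸ pi_laplaceReal_toReal_preimage_add_le μ hlam δ {e | f (x + e) = c}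
  exact le_of_exp_mul_bounds ENNReal.toReal_nonneg (hA.trans hA_shift)
    (hc_shift.trans (by gcongr; exact hB c hc)) hABstrict hδ

/-- Certified region for anisotropic Laplace smoothing (weighted ℓ1 condition). -/
theorem laplace_certified_region
    {d : ℕ} {Y : Type*} [Fintype Y] [MeasurableSpace Y] [MeasurableSingletonClass Y]
    (f : (Fin d → ℝ) → Y) (hf : Measurable f)
    (μ : Fin d → ℝ) (lam : Fin d → ℝ) (hlam : ∀ i, 0 < lam i)
    (noise : Measure (Fin d → ℝ))
    (hnoise : noise = Measure.pi fun i : Fin d => laplaceReal (μ i) (lam i))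
    (x : Fin d → ℝ) (cA : Y) (pA pB : ℝ)
    (hpA : pA ∈ Set.Icc (0 : ℝ) 1) (hpB : pB ∈ Set.Icc (0 : ℝ) 1)
    (hABstrict : pA > pB)
    (hA : (noise {e | f (x + e) = cA}).toReal ≥ pA)
    (hB : ∀ c : Y, c ≠ cA → pB ≥ (noise {e | f (x + e) = c}).toReal)
    (δ : Fin d → ℝ)
    (hδ : (∑ i, |δ i| / lam i) ≤ (1 / 2) * Real.log (pA / pB)) :
    ∀ c : Y, c ≠ cA →
      (noise {e | f (x + δ + e) = cA}).toReal ≥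
        (noise {e | f (x + δ + e) = c}).toReal :=
  laplace_certified_region_general f μ lam hlam noise hnoise x cA pA pB hABstrict hA hB δ hδ
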